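/- Let R be a commutative local ring, s ∈ R, and let A ∈ K_s(R) be neither a unit of K_s(R) nor quasinilpotent in K_s(R). Then A is quasipolar in K_s(R) if and only if the equation x² − tr(A)x + det_s(A) = 0 has a solution in R. -/

import Mathlib

/-- The generalized matrix ring `K_s(R)` with multiplier `s`. -/
@[ext]
structure GenMatrix (R : Type*) (s : R) where
  a : R
  b : R
  c : R
  d : R

namespace GenMatrix

variable {R : Type*} [Ring R] {s : R}

instance : Add (GenMatrix R s) :=
  ⟨fun X Y => ⟨X.a + Y.a, X.b + Y.b, X.c + Y.c, X.d + Y.d⟩⟩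
instance : Neg (GenMatrix R s) := ⟨fun X => ⟨-X.a, -X.b, -X.c, -X.d⟩⟩
instance : Zero (GenMatrix R s) := ⟨⟨0, 0, 0, 0⟩⟩
instance : One (GenMatrix R s) := ⟨⟨1, 0, 0, 1⟩⟩
instance : Mul (GenMatrix R s) :=
  ⟨fun X Y => ⟨X.a * Y.a + s * (X.b * Y.c), X.a * Y.b + X.b * Y.d,
    X.c * Y.a + X.d * Y.c, s * (X.c * Y.b) + X.d * Y.d⟩⟩

@[simp] lemma add_a (X Y : GenMatrix R s) : (X + Y).a = X.a + Y.a := rfl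
@[simp] lemma add_b (X Y : GenMatrix R s) : (X + Y).b = X.b + Y.b := rfl
@[simp] lemma add_c (X Y : GenMatrix R s) : (X + Y).c = X.c + Y.c := rfl
@[simp] lemma add_d (X Y : GenMatrix R s) : (X + Y).d = X.d + Y.d := rfl
@[simp] lemma neg_a (X : GenMatrix R s) : (-X).a = -X.a := rfl
@[simp] lemma neg_b (X : GenMatrix R s) : (-X).b = -X.b := rfl
@[simp] lemma neg_c (X : GenMatrix R s) : (-X).c = -X.c := rfl
@[simp] lemma neg_d (X : GenMatrix R s) : (-X).d = -X.d := rfl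
@[simp] lemma zero_a : (0 : GenMatrix R s).a = 0 := rfl
@[simp] lemma zero_b : (0 : GenMatrix R s).b = 0 := rfl
@[simp] lemma zero_c : (0 : GenMatrix R s).c = 0 := rfl
@[simp] lemma zero_d : (0 : GenMatrix R s).d = 0 := rfl
@[simp] lemma one_a : (1 : GenMatrix R s).a = 1 := rfl
@[simp] lemma one_b : (1 : GenMatrix R s).b = 0 := rfl
@[simp] lemma one_c : (1 : GenMatrix R s).c = 0 := rfl
@[simp] lemma one_d : (1 : GenMatrix R s).d = 1 := rfl
@[simp] lemma mul_a (X Y : GenMatrix R s) : (X * Y).a = X.a * Y.a + s * (X.b * Y.c) := rfl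
@[simp] lemma mul_b (X Y : GenMatrix R s) : (X * Y).b = X.a * Y.b + X.b * Y.d := rfl
@[simp] lemma mul_c (X Y : GenMatrix R s) : (X * Y).c = X.c * Y.a + X.d * Y.c := rfl
@[simp] lemma mul_d (X Y : GenMatrix R s) : (X * Y).d = s * (X.c * Y.b) + X.d * Y.d := rfl

instance : AddCommGroup (GenMatrix R s) where
  add_assoc X Y Z := by ext <;> simp [add_assoc]
  zero_add X := by ext <;> simp
  add_zero X := by ext <;> simp
  add_comm X Y := by ext <;> simp [add_comm]
  neg_add_cancel X := by ext <;> simp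
  nsmul := nsmulRec
  zsmul := zsmulRec

section Central

variable [Fact (s ∈ Set.center R)]

lemma scomm (r : R) : r * s = s * r := Semigroup.mem_center_iff.mp Fact.out r

lemma sshift (r t : R) : r * (s * t) = s * (r * t) := by
  rw [← mul_assoc, scomm (s := s), mul_assoc]

instance : Ring (GenMatrix R s) where
  __ := (inferInstance : AddCommGroup (GenMatrix R s))
  left_distrib X Y Z := by ext <;> simp [mul_add, add_mul] <;> abel
  right_distrib X Y Z := by ext <;> simp [mul_add, add_mul] <;> abel
  zero_mul X := by ext <;> simp
  mul_zero X := by ext <;> simp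
  mul_assoc X Y Z := by
    ext <;> simp only [mul_a, mul_b, mul_c, mul_d, mul_add, add_mul, mul_assoc, sshift] <;> abel
  one_mul X := by ext <;> simp
  mul_one X := by ext <;> simp

end Central

instance central_of_comm {R : Type*} [CommRing R] (s : R) : Fact (s ∈ Set.center R) :=
  ⟨by rw [Set.center_eq_univ]; trivial⟩

/-- `det_s` of a generalized matrix over a commutative ring. -/
def dets {R : Type*} {s : R} [CommRing R] (A : GenMatrix R s) : R :=
  A.a * A.d - s * (A.b * A.c)

/-- The trace of a generalized matrix. -/
def tr {R : Type*} {s : R} [Ring R] (A : GenMatrix R s) : R := A.a + A.d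

end GenMatrix

/-- An element `a` is quasinilpotent if `1 + a*x` is a unit for every `x` commuting with `a`. -/
def IsQuasinilpotent {R : Type*} [Ring R] (a : R) : Prop :=
  ∀ x : R, a * x = x * a → IsUnit (1 + a * x)

/-- An element `a` is quasipolar if there is an idempotent `p` in the double commutant of `a`
with `a + p` a unit and `a * p` quasinilpotent. -/
def IsQuasipolar {R : Type*} [Ring R] (a : R) : Prop :=
  ∃ p : R, IsIdempotentElem p ∧ (∀ y : R, y * a = a * y → p * y = y * p) ∧
    IsUnit (a + p) ∧ IsQuasinilpotent (a * p)

/-- A ring is quasipolar if every element is quasipolar. -/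
def IsQuasipolarRing (R : Type*) [Ring R] : Prop := ∀ a : R, IsQuasipolar a

/-- An element is strongly clean if it is the sum of an idempotent and a unit that commute. -/
def IsStronglyClean {R : Type*} [Ring R] (a : R) : Prop :=
  ∃ e u : R, IsIdempotentElem e ∧ IsUnit u ∧ a = e + u ∧ e * u = u * e

/-- A ring is strongly clean if every element is strongly clean. -/
def IsStronglyCleanRing (R : Type*) [Ring R] : Prop := ∀ a : R, IsStronglyClean a

/-- `a` is similar to `b` if `b = u⁻¹ * a * u` for some unit `u`. -/
def IsSimilar {R : Type*} [Ring R] (a b : R) : Prop :=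
  ∃ u : Rˣ, b = ↑u⁻¹ * a * ↑u

/-- The Jacobson radical of a ring: the intersection of all maximal left ideals. -/
def JacobsonRadical (R : Type*) [Ring R] : Ideal R := Ideal.jacobson ⊥

/-! Over a local ring `R`, an idempotent of `K_s(R)` other than `0` and `1` has trace `1` and
`det_s` equal to `0`; commuting with `A`, it turns the trace of `A * p` into a root of the
characteristic polynomial `x² - tr(A) x + det_s(A)` of `A` (Cayley–Hamilton). Conversely, since
`det_s A` is a nonunit while `tr A` is a unit (otherwise `A` would be quasinilpotent), a root
yields a factorisation with roots `α` a unit and `β` a nonunit, and the spectral idempotent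
`p = (α - β)⁻¹ (α - A)` of the eigenvalue `β` makes `A` quasipolar: `A * p = β p` is
quasinilpotent and `det_s (A + p) = α (1 + β)` is a unit. -/

open IsLocalRing

section SpectralIdempotent

variable {R E : Type*} [CommRing R] [Ring E] [Algebra R E] {A : E} {α β : R}

lemma mul_smul_smul_one_sub (hA : A * A = (α + β) • A - (α * β) • (1 : E)) (v : R) :
    A * (v • (α • 1 - A)) = β • v • (α • 1 - A) := by
  rw [mul_smul_comm, mul_sub, mul_smul_comm, mul_one, hA]
  module

lemma isIdempotentElem_smul_smul_one_sub (hA : A * A = (α + β) • A - (α * β) • (1 : E))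
    {v : R} (hv : v * (α - β) = 1) : IsIdempotentElem (v • (α • 1 - A)) := by
  have hsq : (α • 1 - A) * (α • 1 - A) = (α - β) • (α • (1 : E) - A) := by
    simp only [sub_mul, mul_sub, smul_mul_assoc, mul_smul_comm, one_mul, mul_one, hA]
    module
  rw [IsIdempotentElem, smul_mul_smul_comm, hsq, smul_smul, mul_assoc, hv, mul_one]

end SpectralIdempotent

namespace GenMatrix

variable {R : Type*} [CommRing R] {s : R}

@[simp] lemma sub_a (X Y : GenMatrix R s) : (X - Y).a = X.a - Y.a := (sub_eq_add_neg _ _).symm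
@[simp] lemma sub_b (X Y : GenMatrix R s) : (X - Y).b = X.b - Y.b := (sub_eq_add_neg _ _).symm
@[simp] lemma sub_c (X Y : GenMatrix R s) : (X - Y).c = X.c - Y.c := (sub_eq_add_neg _ _).symm
@[simp] lemma sub_d (X Y : GenMatrix R s) : (X - Y).d = X.d - Y.d := (sub_eq_add_neg _ _).symm

instance : SMul R (GenMatrix R s) := ⟨fun r X => ⟨r * X.a, r * X.b, r * X.c, r * X.d⟩⟩

@[simp] lemma smul_a (r : R) (X : GenMatrix R s) : (r • X).a = r * X.a := rfl
@[simp] lemma smul_b (r : R) (X : GenMatrix R s) : (r • X).b = r * X.b := rfl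
@[simp] lemma smul_c (r : R) (X : GenMatrix R s) : (r • X).c = r * X.c := rfl
@[simp] lemma smul_d (r : R) (X : GenMatrix R s) : (r • X).d = r * X.d := rfl

instance : Module R (GenMatrix R s) where
  one_smul X := by ext <;> simp
  mul_smul r t X := by ext <;> simp [mul_assoc]
  smul_zero r := by ext <;> simp
  smul_add r X Y := by ext <;> simp [mul_add]
  add_smul r t X := by ext <;> simp [add_mul]
  zero_smul X := by ext <;> simp

instance : Algebra R (GenMatrix R s) :=
  Algebra.ofModule (fun r X Y => by ext <;> simp <;> ring) (fun r X Y => by ext <;> simp <;> ring)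

lemma tr_sub (X Y : GenMatrix R s) : tr (X - Y) = tr X - tr Y := by
  simp only [tr, sub_a, sub_d]; ring

lemma tr_smul (r : R) (X : GenMatrix R s) : tr (r • X) = r * tr X := by
  simp only [tr, smul_a, smul_d]; ring

lemma dets_mul (X Y : GenMatrix R s) : dets (X * Y) = dets X * dets Y := by
  simp only [dets, mul_a, mul_b, mul_c, mul_d]; ring

lemma dets_one : dets (1 : GenMatrix R s) = 1 := by
  simp [dets]

lemma dets_smul (r : R) (X : GenMatrix R s) : dets (r • X) = r ^ 2 * dets X := by
  simp only [dets, smul_a, smul_b, smul_c, smul_d]; ring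

lemma dets_one_add (X : GenMatrix R s) : dets (1 + X) = 1 + tr X + dets X := by
  simp [dets, tr]; ring

lemma dets_smul_add_smul_one (t u : R) (X : GenMatrix R s) :
    dets (t • X + u • 1) = t ^ 2 * dets X + t * u * tr X + u ^ 2 := by
  simp [dets, tr]; ring

lemma mul_self_eq_tr_smul_sub_dets_smul (X : GenMatrix R s) :
    X * X = tr X • X - dets X • 1 := by
  ext <;> simp [tr, dets] <;> ring

lemma tr_mul_self (X : GenMatrix R s) : tr (X * X) = tr X ^ 2 - 2 * dets X := by
  simp [tr, dets]; ring

def adjugate (X : GenMatrix R s) : GenMatrix R s := ⟨X.d, -X.b, -X.c, X.a⟩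

lemma mul_adjugate (X : GenMatrix R s) : X * adjugate X = dets X • 1 := by
  ext <;> simp [adjugate, dets] <;> ring

lemma adjugate_mul (X : GenMatrix R s) : adjugate X * X = dets X • 1 := by
  ext <;> simp [adjugate, dets] <;> ring

lemma isUnit_iff_isUnit_dets {X : GenMatrix R s} : IsUnit X ↔ IsUnit (dets X) := by
  refine ⟨fun ⟨u, hu⟩ => hu ▸ IsUnit.of_mul_eq_one (dets (↑u⁻¹ : GenMatrix R s))
    (by rw [← dets_mul, u.mul_inv, dets_one]), fun h => ?_⟩
  obtain ⟨w, hw⟩ := h.exists_left_inv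
  refine isUnit_iff_exists.mpr ⟨w • adjugate X, ?_, ?_⟩
  · rw [mul_smul_comm, mul_adjugate, smul_smul, hw, one_smul]
  · rw [smul_mul_assoc, adjugate_mul, smul_smul, hw, one_smul]

lemma tr_mul_isRoot_of_isIdempotentElem {A p : GenMatrix R s} (hp : IsIdempotentElem p) (hAp : Commute A p)
    (htr : tr p = 1) (hdet : dets p = 0) :
    tr (A * p) ^ 2 - tr A * tr (A * p) + dets A = 0 := by
  have hsq : (A * p) * (A * p) = tr A • (A * p) - dets A • p := by
    rw [hAp.symm.mul_mul_mul_comm, hp.eq, mul_self_eq_tr_smul_sub_dets_smul, sub_mul,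
      smul_mul_assoc, smul_mul_assoc, one_mul]
  have := congrArg tr hsq
  rw [tr_mul_self, dets_mul, hdet, tr_sub, tr_smul, tr_smul, htr] at this
  linear_combination this

end GenMatrix

section LocalRing

variable {R : Type*} [CommRing R] [IsLocalRing R]

lemma IsUnit.add_of_mem_maximalIdeal {a b : R} (ha : IsUnit a) (hb : b ∈ maximalIdeal R) :
    IsUnit (a + b) := by
  by_contra h
  exact notMem_maximalIdeal.mpr ha
    (by simpa using sub_mem ((mem_maximalIdeal _).mpr h) hb)

lemma IsLocalRing.eq_zero_or_eq_one_of_isIdempotentElem {e : R} (he : IsIdempotentElem e) :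
    e = 0 ∨ e = 1 := by
  rcases isUnit_or_isUnit_one_sub_self e with h | h
  · exact Or.inr ((IsIdempotentElem.iff_eq_one_of_isUnit h).mp he)
  · exact Or.inl (sub_eq_self.mp ((IsIdempotentElem.iff_eq_one_of_isUnit h).mp he.one_sub))

lemma exists_isUnit_mem_maximalIdeal_of_root {t d x : R} (ht : IsUnit t)
    (hd : d ∈ maximalIdeal R) (hx : x ^ 2 - t * x + d = 0) :
    ∃ α β, IsUnit α ∧ β ∈ maximalIdeal R ∧ α + β = t ∧ α * β = d := by
  have hprod : (t - x) * x = d := by linear_combination -hx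
  rcases (maximalIdeal.isMaximal R).isPrime.mem_or_mem (hprod ▸ hd) with h | h
  · refine ⟨x, t - x, ?_, h, by ring, by rw [mul_comm, hprod]⟩
    simpa using ht.add_of_mem_maximalIdeal (neg_mem h)
  · refine ⟨t - x, x, ?_, h, by ring, hprod⟩
    simpa [sub_eq_add_neg] using ht.add_of_mem_maximalIdeal (neg_mem h)

namespace GenMatrix

variable {s : R}

lemma isUnit_one_add_of_tr_mem_of_dets_mem {X : GenMatrix R s} (ht : tr X ∈ maximalIdeal R)
    (hd : dets X ∈ maximalIdeal R) : IsUnit (1 + X) := by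
  rw [isUnit_iff_isUnit_dets, dets_one_add, add_assoc]
  exact isUnit_one.add_of_mem_maximalIdeal (add_mem ht hd)

lemma isQuasinilpotent_smul {β : R} (hβ : β ∈ maximalIdeal R) (Y : GenMatrix R s) :
    IsQuasinilpotent (β • Y) := by
  intro x _
  rw [smul_mul_assoc]
  refine isUnit_one_add_of_tr_mem_of_dets_mem ?_ ?_
  · rw [tr_smul]; exact Ideal.mul_mem_right _ _ hβ
  · rw [dets_smul, sq, mul_assoc]; exact Ideal.mul_mem_right _ _ hβ

lemma isQuasinilpotent_of_tr_mem_of_dets_mem {A : GenMatrix R s} (ht : tr A ∈ maximalIdeal R)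
    (hd : dets A ∈ maximalIdeal R) : IsQuasinilpotent A := by
  intro x hx
  have hsq : (A * x) * (A * x) = tr A • (A * (x * x)) - dets A • (x * x) := by
    rw [(Commute.symm hx).mul_mul_mul_comm, mul_self_eq_tr_smul_sub_dets_smul, sub_mul,
      smul_mul_assoc, smul_mul_assoc, one_mul]
  have hdet : dets (A * x) ∈ maximalIdeal R := dets_mul A x ▸ Ideal.mul_mem_right _ _ hd
  -- `(A x)² = A² x²` has trace in the maximal ideal by Cayley–Hamilton for `A`, hence so has
  -- `tr (A x) ^ 2 = tr ((A x)²) + 2 det_s (A x)`, and the maximal ideal is prime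
  have htr : tr (A * x) ^ 2 ∈ maximalIdeal R := by
    rw [show tr (A * x) ^ 2 = tr ((A * x) * (A * x)) + 2 * dets (A * x) by rw [tr_mul_self]; ring,
      hsq, tr_sub, tr_smul, tr_smul]
    exact add_mem (sub_mem (Ideal.mul_mem_right _ _ ht) (Ideal.mul_mem_right _ _ hd))
      (Ideal.mul_mem_left _ _ hdet)
  exact isUnit_one_add_of_tr_mem_of_dets_mem
    ((maximalIdeal.isMaximal R).isPrime.mem_of_pow_mem 2 htr) hdet

lemma eq_zero_or_eq_one_or_of_isIdempotentElem {p : GenMatrix R s} (hp : IsIdempotentElem p) :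
    p = 0 ∨ p = 1 ∨ tr p = 1 ∧ dets p = 0 := by
  have hdet : IsIdempotentElem (dets p) := by rw [IsIdempotentElem, ← dets_mul, hp.eq]
  rcases IsLocalRing.eq_zero_or_eq_one_of_isIdempotentElem hdet with h0 | h1
  · have hp' : p = tr p • p := by
      conv_lhs => rw [← hp.eq, mul_self_eq_tr_smul_sub_dets_smul, h0, zero_smul, sub_zero]
    have htr : IsIdempotentElem (tr p) := by
      rw [IsIdempotentElem, ← tr_smul, ← hp']
    rcases IsLocalRing.eq_zero_or_eq_one_of_isIdempotentElem htr with ht | ht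
    · exact Or.inl (by rw [hp', ht, zero_smul])
    · exact Or.inr (Or.inr ⟨ht, h0⟩)
  · have hunit : IsUnit p := isUnit_iff_isUnit_dets.mpr (h1 ▸ isUnit_one)
    exact Or.inr (Or.inl ((IsIdempotentElem.iff_eq_one_of_isUnit hunit).mp hp))

theorem isQuasipolar_of_roots {A : GenMatrix R s} {α β : R} (hα : IsUnit α)
    (hβ : β ∈ maximalIdeal R) (hsum : α + β = tr A) (hprod : α * β = dets A) :
    IsQuasipolar A := by
  obtain ⟨v, hv⟩ := (hα.add_of_mem_maximalIdeal (neg_mem hβ)).exists_left_inv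
  rw [← sub_eq_add_neg] at hv
  have hA : A * A = (α + β) • A - (α * β) • 1 := by
    rw [hsum, hprod, mul_self_eq_tr_smul_sub_dets_smul]
  refine ⟨v • (α • 1 - A), isIdempotentElem_smul_smul_one_sub hA hv, fun y hy => ?_, ?_, ?_⟩
  · exact ((((Commute.one_right y).smul_right α).sub_right hy).smul_right v).eq.symm
  · have hsplit : A + v • (α • 1 - A) = (1 - v) • A + (v * α) • 1 := by module
    rw [hsplit, isUnit_iff_isUnit_dets, dets_smul_add_smul_one, ← hsum, ← hprod,
      show (1 - v) ^ 2 * (α * β) + (1 - v) * (v * α) * (α + β) + (v * α) ^ 2 = α * (1 + β) by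
        linear_combination α * hv]
    exact hα.mul (isUnit_one.add_of_mem_maximalIdeal hβ)
  · rw [mul_smul_smul_one_sub hA]
    exact isQuasinilpotent_smul hβ _

end GenMatrix

end LocalRing

/-- over a commutative local ring `R`, if `A ∈ K_s(R)` is neither a unit nor
quasinilpotent, then `A` is quasipolar iff `x² - tr(A)x + det_s(A) = 0` is solvable in `R`. -/
theorem genMatrix_isQuasipolar_iff_solvable {R : Type*} [CommRing R] [IsLocalRing R]
    (s : R) (A : GenMatrix R s) (hA1 : ¬ IsUnit A) (hA2 : ¬ IsQuasinilpotent A) :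
    IsQuasipolar A ↔
      ∃ x : R, x ^ 2 - GenMatrix.tr A * x + GenMatrix.dets A = 0 := by
  have hd : GenMatrix.dets A ∈ maximalIdeal R :=
    (mem_maximalIdeal _).mpr (mt GenMatrix.isUnit_iff_isUnit_dets.mpr hA1)
  constructor
  · rintro ⟨p, hp, hpA, hunit, hqn⟩
    rcases GenMatrix.eq_zero_or_eq_one_or_of_isIdempotentElem hp with rfl | rfl | ⟨htr, hdet⟩
    · exact absurd (by simpa using hunit) hA1
    · exact absurd (by simpa using hqn) hA2
    · exact ⟨_, GenMatrix.tr_mul_isRoot_of_isIdempotentElem hp (hpA A rfl).symm htr hdet⟩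
  · rintro ⟨x, hx⟩
    have ht : IsUnit (GenMatrix.tr A) := by
      by_contra h
      exact hA2 (GenMatrix.isQuasinilpotent_of_tr_mem_of_dets_mem ((mem_maximalIdeal _).mpr h) hd)
    obtain ⟨α, β, hα, hβ, hsum, hprod⟩ := exists_isUnit_mem_maximalIdeal_of_root ht hd hx
    exact GenMatrix.isQuasipolar_of_roots hα hβ hsum hprod
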